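/- arXiv:2605.08408 — 2 statements merged into one kernel-verified Lean document; each statement's English description precedes it below -/
import Mathlib

section
/- In the setup above, with ∇f = r - Jᵀλ† (i.e. r = ∇f + Jᵀλ†), one has ⟨∇f, D G⟩ = ⟨r, D r⟩ - κ (λ†)ᵀ h. Consequently, if D ⪰ (1/(G+δ)) I and ‖λ†‖_∞ ≤ Λ, then -⟨∇f, D G⟩ ≤ -(1/(G+δ))‖r‖² + κΛ‖h‖₁. -/
open Matrix

/-- With `r = ∇f + Jᵀλ†`, one has `⟨∇f, D G⟩ = ⟨r, D r⟩ - κ (λ†)ᵀ h`; and if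
`D ⪰ (1/(G+δ)) I` and `‖λ†‖_∞ ≤ Λ`, then
`-⟨∇f, D G⟩ ≤ -(1/(G+δ))‖r‖² + κΛ‖h‖₁`. -/
theorem feedback_inner_product_bound
    (m n : ℕ) (J : Matrix (Fin m) (Fin n) ℝ) (D : Matrix (Fin n) (Fin n) ℝ)
    (hJ : J.rank = m) (hD : D.PosDef)
    (gradf : Fin n → ℝ) (h : Fin m → ℝ) (κ G δ Λ : ℝ) (hκ : 0 ≤ κ)
    (M : Matrix (Fin m) (Fin m) ℝ) (hM : M = J * D * Jᵀ)
    (lamdag : Fin m → ℝ) (hlamdag : lamdag = -(M⁻¹ *ᵥ (J *ᵥ (D *ᵥ gradf))))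
    (r : Fin n → ℝ) (hr : r = gradf + Jᵀ *ᵥ lamdag)
    (lam : Fin m → ℝ) (hlam : lam = -(M⁻¹ *ᵥ (J *ᵥ (D *ᵥ gradf) - κ • h)))
    (Gv : Fin n → ℝ) (hGv : Gv = gradf + Jᵀ *ᵥ lam)
    (hDlower : ∀ x : Fin n → ℝ, (1 / (G + δ)) * (x ⬝ᵥ x) ≤ x ⬝ᵥ (D *ᵥ x))
    (hΛ : ∀ i : Fin m, |lamdag i| ≤ Λ) :
    gradf ⬝ᵥ (D *ᵥ Gv) = r ⬝ᵥ (D *ᵥ r) - κ * (lamdag ⬝ᵥ h) ∧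
      -(gradf ⬝ᵥ (D *ᵥ Gv))
        ≤ -(1 / (G + δ)) * (r ⬝ᵥ r) + κ * Λ * ∑ i, |h i| := by
  -- rows of J are linearly independent
  have hLI : LinearIndependent ℝ (fun i ↦ J i) := by
    rw [linearIndependent_iff_card_eq_finrank_span]
    rw [J.rank_eq_finrank_span_row] at hJ
    simp [Set.finrank, ← hJ]; rfl
  have hvin : Function.Injective (J.vecMul) := Matrix.vecMul_injective_iff.mpr hLI
  have hDsym : Dᵀ = D := hD.isHermitian
  -- transpose dot product identities
  have tdot : ∀ (u : Fin m → ℝ) (v : Fin n → ℝ), (Jᵀ *ᵥ u) ⬝ᵥ v = u ⬝ᵥ (J *ᵥ v) := by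
    intro u v
    rw [mulVec_transpose, ← dotProduct_mulVec]
  have tdot' : ∀ (u : Fin n → ℝ) (v : Fin m → ℝ), u ⬝ᵥ (Jᵀ *ᵥ v) = (J *ᵥ u) ⬝ᵥ v := by
    intro u v
    rw [dotProduct_mulVec, vecMul_transpose]
  have Ddot : ∀ (u v : Fin n → ℝ), u ⬝ᵥ (D *ᵥ v) = (D *ᵥ u) ⬝ᵥ v := by
    intro u v
    rw [dotProduct_mulVec, ← mulVec_transpose, hDsym]
  -- M is positive definite, hence invertible
  have hMposdef : M.PosDef := by
    refine posDef_iff_dotProduct_mulVec.mpr ⟨?_, ?_⟩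
    · rw [hM]; show (J * D * Jᵀ)ᵀ = _
      rw [transpose_mul, transpose_mul, transpose_transpose, hDsym, Matrix.mul_assoc]
    · intro x hx
      have hy : Jᵀ *ᵥ x ≠ 0 := by
        rw [mulVec_transpose]
        intro hc
        exact hx (hvin (by simpa using hc))
      have hpos := hD.dotProduct_mulVec_pos hy
      simp only [star_trivial] at hpos ⊢
      calc (0:ℝ) < (Jᵀ *ᵥ x) ⬝ᵥ (D *ᵥ (Jᵀ *ᵥ x)) := hpos
        _ = x ⬝ᵥ (M *ᵥ x) := by
          rw [hM, ← mulVec_mulVec, ← mulVec_mulVec, ← tdot]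
  have hMunit : IsUnit M.det := (Matrix.isUnit_iff_isUnit_det M).mp hMposdef.isUnit
  have hcancel : ∀ v : Fin m → ℝ, M *ᵥ (M⁻¹ *ᵥ v) = v := by
    intro v
    rw [mulVec_mulVec, Matrix.mul_nonsing_inv _ hMunit, one_mulVec]
  have hMsym : Mᵀ = M := hMposdef.isHermitian
  have Mdot : ∀ (u v : Fin m → ℝ), (M *ᵥ u) ⬝ᵥ v = u ⬝ᵥ (M *ᵥ v) := by
    intro u v
    rw [dotProduct_mulVec u, ← mulVec_transpose, hMsym]
  -- basic facts
  have fact1 : M *ᵥ lamdag = -(J *ᵥ (D *ᵥ gradf)) := by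
    rw [hlamdag, mulVec_neg, hcancel]
  have fact2 : J *ᵥ (D *ᵥ r) = 0 := by
    have e : J *ᵥ (D *ᵥ (Jᵀ *ᵥ lamdag)) = M *ᵥ lamdag := by
      rw [hM, mulVec_mulVec, mulVec_mulVec]
    rw [hr, mulVec_add, mulVec_add, e, fact1]
    simp
  have fact3 : lam = lamdag + κ • (M⁻¹ *ᵥ h) := by
    rw [hlam, hlamdag, mulVec_sub, mulVec_smul]
    funext i; simp; ring
  have hGv2 : Gv = r + κ • (Jᵀ *ᵥ (M⁻¹ *ᵥ h)) := by
    rw [hGv, fact3, hr, mulVec_add, mulVec_smul, add_assoc]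
  -- main identity pieces
  have keyA : gradf ⬝ᵥ (D *ᵥ r) = r ⬝ᵥ (D *ᵥ r) := by
    have e : gradf = r - Jᵀ *ᵥ lamdag := by rw [hr]; abel
    rw [e, sub_dotProduct, tdot, fact2]
    simp
  have keyB : gradf ⬝ᵥ (D *ᵥ (Jᵀ *ᵥ (M⁻¹ *ᵥ h))) = -(lamdag ⬝ᵥ h) := by
    have e : J *ᵥ (D *ᵥ gradf) = -(M *ᵥ lamdag) := by rw [fact1, neg_neg]
    rw [Ddot, tdot', e, neg_dotProduct, Mdot, hcancel]
  have main : gradf ⬝ᵥ (D *ᵥ Gv) = r ⬝ᵥ (D *ᵥ r) - κ * (lamdag ⬝ᵥ h) := by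
    rw [hGv2, mulVec_add, dotProduct_add, keyA, mulVec_smul, dotProduct_smul,
      keyB, smul_eq_mul]
    ring
  refine ⟨main, ?_⟩
  rw [main]
  have b1 : -(r ⬝ᵥ (D *ᵥ r)) ≤ -(1 / (G + δ)) * (r ⬝ᵥ r) := by
    have := hDlower r
    linarith
  have b2 : κ * (lamdag ⬝ᵥ h) ≤ κ * Λ * ∑ i, |h i| := by
    have hb : lamdag ⬝ᵥ h ≤ Λ * ∑ i, |h i| := by
      rw [Finset.mul_sum]
      refine Finset.sum_le_sum fun i _ ↦ ?_
      calc lamdag i * h i ≤ |lamdag i * h i| := le_abs_self _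
        _ = |lamdag i| * |h i| := abs_mul _ _
        _ ≤ Λ * |h i| := by
          exact mul_le_mul_of_nonneg_right (hΛ i) (abs_nonneg _)
    calc κ * (lamdag ⬝ᵥ h) ≤ κ * (Λ * ∑ i, |h i|) := mul_le_mul_of_nonneg_left hb hκ
      _ = κ * Λ * ∑ i, |h i| := by ring
  linarith
end

section
/- Let h: ℝ^n → ℝ^m be C² on a convex neighborhood of a segment [θ, θ+s] with second-order Taylor bound ‖h(θ+s) - h(θ) - J_h(θ)s‖₁ ≤ (L/2)‖s‖². Suppose the update is θ' = θ - η D G - η D e where J_h(θ) D G = κ h(θ), 0 ≤ κη ≤ 1, ‖J_h(θ)‖_{2→1} ≤ J₁, and ‖D‖ ≤ 1/δ. Then ‖h(θ')‖₁ ≤ (1 - κη)‖h(θ)‖₁ + (ηJ₁/δ)‖e‖ + (L/2)‖θ' - θ‖². -/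
/-!
Writing `E = h θ' - h θ - J (θ' - θ)` for the Taylor remainder, the update and `J D G = κ h θ`
give `J (θ' - θ) = -κη h θ - η J D e`, hence `h θ' = E + (1 - κη) h θ - η J D e`.
The `ℓ¹` triangle inequality (with `1 - κη ≥ 0`), the Taylor bound on `E`, and the composite
bound `‖J D‖_{2→1} ≤ J₁ / δ` finish the estimate.
-/

open Matrix

section VectorNorms

variable {ι κ : Type*} [Fintype ι] [Fintype κ]

lemma sum_abs_mulVec_mulVec_le (J : Matrix κ ι ℝ) (D : Matrix ι ι ℝ) {a b : ℝ}
    (hJ : ∀ x : ι → ℝ, ∑ i, |(J *ᵥ x) i| ≤ a * Real.sqrt (∑ j, (x j) ^ 2))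
    (hD : ∀ x : ι → ℝ, Real.sqrt (∑ j, ((D *ᵥ x) j) ^ 2) ≤ b * Real.sqrt (∑ j, (x j) ^ 2))
    (x : ι → ℝ) :
    ∑ i, |(J *ᵥ (D *ᵥ x)) i| ≤ a * b * Real.sqrt (∑ j, (x j) ^ 2) := by
  rcases le_or_gt 0 a with ha | ha
  · calc ∑ i, |(J *ᵥ (D *ᵥ x)) i| ≤ a * Real.sqrt (∑ j, ((D *ᵥ x) j) ^ 2) := hJ _
      _ ≤ a * (b * Real.sqrt (∑ j, (x j) ^ 2)) := by gcongr; exact hD x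
      _ = a * b * Real.sqrt (∑ j, (x j) ^ 2) := by ring
  · -- a bound with `a < 0` forces every `ℓ²` norm to vanish
    have hx : Real.sqrt (∑ j, (x j) ^ 2) = 0 := by
      have hl1 : 0 ≤ ∑ i, |(J *ᵥ x) i| := by positivity
      have hl2 : 0 ≤ Real.sqrt (∑ j, (x j) ^ 2) := Real.sqrt_nonneg _
      nlinarith [hJ x]
    rw [hx, mul_zero]
    have hl2 : 0 ≤ Real.sqrt (∑ j, ((D *ᵥ x) j) ^ 2) := Real.sqrt_nonneg _
    nlinarith [hJ (D *ᵥ x)]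

lemma sum_abs_add_smul_sub_smul_le (v w u : ι → ℝ) {c η : ℝ} (hc : 0 ≤ c) (hη : 0 ≤ η) :
    ∑ i, |(v + c • w - η • u) i| ≤ ∑ i, |v i| + c * ∑ i, |w i| + η * ∑ i, |u i| := by
  rw [Finset.mul_sum, Finset.mul_sum, ← Finset.sum_add_distrib, ← Finset.sum_add_distrib]
  refine Finset.sum_le_sum fun i _ => ?_
  simp only [Pi.add_apply, Pi.sub_apply, Pi.smul_apply, smul_eq_mul]
  calc |v i + c * w i - η * u i| ≤ |v i| + |c * w i| + |η * u i| := by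
        have := abs_sub (v i + c * w i) (η * u i)
        have := abs_add_le (v i) (c * w i)
        linarith
    _ = |v i| + c * |w i| + η * |u i| := by
        rw [abs_mul, abs_mul, abs_of_nonneg hc, abs_of_nonneg hη]

end VectorNorms

theorem constraint_violation_contraction_general
    (m n : ℕ) (h : (Fin n → ℝ) → Fin m → ℝ)
    (J : Matrix (Fin m) (Fin n) ℝ) (D : Matrix (Fin n) (Fin n) ℝ)
    (θ θ' Gv e : Fin n → ℝ) (η κ L J₁ δ : ℝ)
    (hη : 0 ≤ η)
    (hTaylor : ∑ i, |h θ' i - h θ i - (J *ᵥ (θ' - θ)) i|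
        ≤ L / 2 * ∑ j, (θ' j - θ j) ^ 2)
    (hupdate : θ' = θ - η • (D *ᵥ Gv) - η • (D *ᵥ e))
    (hFL : J *ᵥ (D *ᵥ Gv) = κ • h θ)
    (hκη1 : κ * η ≤ 1)
    (hJ1 : ∀ x : Fin n → ℝ,
      ∑ i, |(J *ᵥ x) i| ≤ J₁ * Real.sqrt (∑ j, (x j) ^ 2))
    (hD : ∀ x : Fin n → ℝ,
      Real.sqrt (∑ j, ((D *ᵥ x) j) ^ 2) ≤ (1 / δ) * Real.sqrt (∑ j, (x j) ^ 2)) :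
    ∑ i, |h θ' i|
      ≤ (1 - κ * η) * ∑ i, |h θ i|
        + η * J₁ / δ * Real.sqrt (∑ j, (e j) ^ 2)
        + L / 2 * ∑ j, (θ' j - θ j) ^ 2 := by
  have hJstep : J *ᵥ (θ' - θ) = -(κ * η) • h θ - η • (J *ᵥ (D *ᵥ e)) := by
    have hstep : θ' - θ = -(η • (D *ᵥ Gv) + η • (D *ᵥ e)) := by rw [hupdate]; abel
    rw [hstep, mulVec_neg, mulVec_add, mulVec_smul, mulVec_smul, hFL]
    module
  have hsplit : h θ' = (h θ' - h θ - J *ᵥ (θ' - θ)) + (1 - κ * η) • h θ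
      - η • (J *ᵥ (D *ᵥ e)) := by
    rw [hJstep]; module
  calc ∑ i, |h θ' i|
      ≤ ∑ i, |(h θ' - h θ - J *ᵥ (θ' - θ)) i| + (1 - κ * η) * ∑ i, |h θ i|
        + η * ∑ i, |(J *ᵥ (D *ᵥ e)) i| := by
        conv_lhs => rw [hsplit]
        exact sum_abs_add_smul_sub_smul_le _ _ _ (by linarith) hη
    _ ≤ L / 2 * ∑ j, (θ' j - θ j) ^ 2 + (1 - κ * η) * ∑ i, |h θ i|
        + η * (J₁ * (1 / δ) * Real.sqrt (∑ j, (e j) ^ 2)) := by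
        gcongr
        · exact hTaylor
        · exact sum_abs_mulVec_mulVec_le J D hJ1 hD e
    _ = (1 - κ * η) * ∑ i, |h θ i| + η * J₁ / δ * Real.sqrt (∑ j, (e j) ^ 2)
        + L / 2 * ∑ j, (θ' j - θ j) ^ 2 := by ring

/-- One-step constraint-violation contraction: if
`θ' = θ - η D G - η D e` with `J D G = κ h(θ)`, `0 ≤ κη ≤ 1`,
`‖J‖_{2→1} ≤ J₁`, `‖D‖ ≤ 1/δ`, and a second-order ℓ¹ Taylor bound holds, then
`‖h(θ')‖₁ ≤ (1-κη)‖h(θ)‖₁ + (ηJ₁/δ)‖e‖ + (L/2)‖θ'-θ‖²`. -/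
theorem constraint_violation_contraction
    (m n : ℕ) (h : (Fin n → ℝ) → Fin m → ℝ)
    (J : Matrix (Fin m) (Fin n) ℝ) (D : Matrix (Fin n) (Fin n) ℝ)
    (θ θ' Gv e : Fin n → ℝ) (η κ L J₁ δ : ℝ)
    (hη : 0 ≤ η) (hδ : 0 < δ) (hL : 0 ≤ L)
    (hTaylor : ∑ i, |h θ' i - h θ i - (J *ᵥ (θ' - θ)) i|
        ≤ L / 2 * ∑ j, (θ' j - θ j) ^ 2)
    (hupdate : θ' = θ - η • (D *ᵥ Gv) - η • (D *ᵥ e))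
    (hFL : J *ᵥ (D *ᵥ Gv) = κ • h θ)
    (hκη0 : 0 ≤ κ * η) (hκη1 : κ * η ≤ 1)
    (hJ1 : ∀ x : Fin n → ℝ,
      ∑ i, |(J *ᵥ x) i| ≤ J₁ * Real.sqrt (∑ j, (x j) ^ 2))
    (hD : ∀ x : Fin n → ℝ,
      Real.sqrt (∑ j, ((D *ᵥ x) j) ^ 2) ≤ (1 / δ) * Real.sqrt (∑ j, (x j) ^ 2)) :
    ∑ i, |h θ' i|
      ≤ (1 - κ * η) * ∑ i, |h θ i|
        + η * J₁ / δ * Real.sqrt (∑ j, (e j) ^ 2)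
        + L / 2 * ∑ j, (θ' j - θ j) ^ 2 :=
  constraint_violation_contraction_general m n h J D θ θ' Gv e η κ L J₁ δ hη hTaylor hupdate hFL
    hκη1 hJ1 hD
end
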